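/- Let H be a weak Hopf algebra over a field k with target map Π_L = μ∘(id⊗S)∘δ and source map Π_R = μ∘(S⊗id)∘δ, and let B be a right H-comodule algebra with a total integral h: H → B that is an algebra map and comodule map. Then q_B(b) = b_(0) h(S(b_(1))) is idempotent and its image equals B^{coH} = {b ∈ B : ρ_B(b) = b_(0) ⊗ Π_L(b_(1))}; moreover B^{coH} is a subalgebra of B containing 1_B. -/
import Mathlib


open TensorProduct

noncomputable section

namespace DoiHopf

variable (k : Type) [Field k]
variable (H : Type) [Ring H] [Algebra k H]
variable (delta : H →ₗ[k] H ⊗[k] H) (eps : H →ₗ[k] k) (S : H →ₗ[k] H)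

/-- regroup `(x ⊗ (y₁ ⊗ y₂)) ⊗ z ↦ (x ⊗ y₁) ⊗ (y₂ ⊗ z)`. -/
def regroup : (H ⊗[k] (H ⊗[k] H)) ⊗[k] H →ₗ[k] (H ⊗[k] H) ⊗[k] (H ⊗[k] H) :=
  (TensorProduct.assoc k (H ⊗[k] H) H H).toLinearMap
    ∘ₗ ((TensorProduct.assoc k H H H).symm.toLinearMap.rTensor H)

/-- The target map `Π_L = μ ∘ (id ⊗ S) ∘ δ`. -/
def PiL : H →ₗ[k] H := LinearMap.mul' k H ∘ₗ S.lTensor H ∘ₗ delta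

/-- The source map `Π_R = μ ∘ (S ⊗ id) ∘ δ`. -/
def PiR : H →ₗ[k] H := LinearMap.mul' k H ∘ₗ S.rTensor H ∘ₗ delta

/-- The formula `Π_L = (ε∘μ ⊗ id) ∘ (id ⊗ swap) ∘ (δ(1) ⊗ id)`, i.e.
`Π_L(x) = ε(1₍₁₎ x) 1₍₂₎`. -/
def PiLformula : H →ₗ[k] H :=
  (TensorProduct.lid k H).toLinearMap
    ∘ₗ ((eps ∘ₗ LinearMap.mul' k H).rTensor H)
    ∘ₗ (TensorProduct.assoc k H H H).symm.toLinearMap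
    ∘ₗ ((TensorProduct.comm k H H).toLinearMap.lTensor H)
    ∘ₗ (TensorProduct.assoc k H H H).toLinearMap
    ∘ₗ (TensorProduct.mk k (H ⊗[k] H) H (delta 1))

/-- The formula `Π_R = (id ⊗ ε∘μ) ∘ (swap ⊗ id) ∘ (id ⊗ δ(1))`, i.e.
`Π_R(x) = ε(x 1₍₂₎) 1₍₁₎`. -/
def PiRformula : H →ₗ[k] H :=
  (TensorProduct.rid k H).toLinearMap
    ∘ₗ ((eps ∘ₗ LinearMap.mul' k H).lTensor H)
    ∘ₗ (TensorProduct.assoc k H H H).toLinearMap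
    ∘ₗ ((TensorProduct.comm k H H).toLinearMap.rTensor H)
    ∘ₗ (TensorProduct.assoc k H H H).symm.toLinearMap
    ∘ₗ ((TensorProduct.mk k H (H ⊗[k] H)).flip (delta 1))

/-- A weak Hopf algebra structure on the associative unital algebra `H`, given by a
coassociative counital comultiplication `delta`, counit `eps` and antipode `S`
satisfying the multiplicativity of `delta`, the weak counit and weak unit axioms,
and the antipode axioms. -/
structure IsWeakHopfAlgebra : Prop where
  coassoc : (TensorProduct.assoc k H H H).toLinearMap ∘ₗ delta.rTensor H ∘ₗ delta
      = delta.lTensor H ∘ₗ delta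
  counit_left : ∀ x, (TensorProduct.lid k H) ((eps.rTensor H) (delta x)) = x
  counit_right : ∀ x, (TensorProduct.rid k H) ((eps.lTensor H) (delta x)) = x
  delta_mul : ∀ x y, delta (x * y) = delta x * delta y
  weak_counit₁ : eps ∘ₗ LinearMap.mul' k H ∘ₗ (LinearMap.mul' k H).rTensor H
      = (TensorProduct.lid k k).toLinearMap
        ∘ₗ (TensorProduct.map (eps ∘ₗ LinearMap.mul' k H) (eps ∘ₗ LinearMap.mul' k H))
        ∘ₗ regroup k H ∘ₗ ((delta.lTensor H).rTensor H)
  weak_counit₂ : eps ∘ₗ LinearMap.mul' k H ∘ₗ (LinearMap.mul' k H).rTensor H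
      = (TensorProduct.lid k k).toLinearMap
        ∘ₗ (TensorProduct.map (eps ∘ₗ LinearMap.mul' k H) (eps ∘ₗ LinearMap.mul' k H))
        ∘ₗ regroup k H
        ∘ₗ ((((TensorProduct.comm k H H).toLinearMap ∘ₗ delta).lTensor H).rTensor H)
  weak_unit₁ : delta.rTensor H (delta 1)
      = (delta 1 ⊗ₜ[k] (1 : H))
        * ((TensorProduct.assoc k H H H).symm ((1 : H) ⊗ₜ[k] delta 1))
  weak_unit₂ : delta.rTensor H (delta 1)
      = ((TensorProduct.assoc k H H H).symm ((1 : H) ⊗ₜ[k] delta 1))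
        * (delta 1 ⊗ₜ[k] (1 : H))
  piL_eq : PiL k H delta S = PiLformula k H delta eps
  piR_eq : PiR k H delta S = PiRformula k H delta eps
  S_mul_S : LinearMap.mul' k H ∘ₗ S.lTensor H
      ∘ₗ ((LinearMap.mul' k H ∘ₗ S.rTensor H).rTensor H)
      ∘ₗ delta.rTensor H ∘ₗ delta = S

/-- A right `H`-comodule algebra structure on the algebra `B`. -/
structure IsComoduleAlgebra {B : Type} [Ring B] [Algebra k B]
    (rhoB : B →ₗ[k] B ⊗[k] H) : Prop where
  counit : ∀ b, (TensorProduct.rid k B) ((eps.lTensor B) (rhoB b)) = b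
  coassoc : rhoB.rTensor H ∘ₗ rhoB
      = (TensorProduct.assoc k B H H).symm.toLinearMap ∘ₗ delta.lTensor B ∘ₗ rhoB
  mul_compat : ∀ a b, rhoB (a * b) = rhoB a * rhoB b
  weak_unit : rhoB.rTensor H (rhoB 1)
      = (rhoB 1 ⊗ₜ[k] (1 : H))
        * ((TensorProduct.assoc k B H H).symm ((1 : B) ⊗ₜ[k] delta 1))

-- ============ development ============
section Dev

variable {k H delta eps S}
variable (hH : IsWeakHopfAlgebra k H delta eps S)
variable {s : Finset (H × H)} (hs : delta 1 = ∑ p ∈ s, p.1 ⊗ₜ[k] p.2)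
include hH hs
set_option linter.unusedSectionVars false
set_option synthInstance.maxHeartbeats 400000
set_option maxHeartbeats 1000000

/-- counit collapse (left) for a representation of `delta x`. -/
lemma counitl {x : H} {t : Finset (H × H)} (ht : delta x = ∑ p ∈ t, p.1 ⊗ₜ[k] p.2) :
    ∑ p ∈ t, eps p.1 • p.2 = x := by
  have := hH.counit_left x
  rw [ht] at this
  simpa [map_sum] using this

lemma counitr {x : H} {t : Finset (H × H)} (ht : delta x = ∑ p ∈ t, p.1 ⊗ₜ[k] p.2) :
    ∑ p ∈ t, eps p.2 • p.1 = x := by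
  have := hH.counit_right x
  rw [ht] at this
  simpa [map_sum] using this

lemma PiL_apply (x : H) : PiL k H delta S x = ∑ p ∈ s, eps (p.1 * x) • p.2 := by
  rw [hH.piL_eq]
  simp only [PiLformula, LinearMap.comp_apply, TensorProduct.mk_apply, hs]
  simp [map_sum, sum_tmul]

lemma PiR_apply (x : H) : PiR k H delta S x = ∑ p ∈ s, eps (x * p.2) • p.1 := by
  rw [hH.piR_eq]
  simp only [PiRformula, LinearMap.comp_apply, LinearMap.flip_apply,
    TensorProduct.mk_apply, hs]
  simp [map_sum, tmul_sum]


set_option linter.unusedSectionVars false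

lemma eps_expand₂ (w z : H) :
    ∑ p ∈ s, eps (w * p.2) * eps (p.1 * z) = eps (w * z) := by
  have := LinearMap.congr_fun hH.weak_counit₂ ((w ⊗ₜ[k] (1:H)) ⊗ₜ[k] z)
  simp only [LinearMap.comp_apply, LinearMap.rTensor_tmul, LinearMap.lTensor_tmul,
    LinearMap.mul'_apply, mul_one, regroup, LinearEquiv.coe_coe, TensorProduct.comm_tmul,
    hs] at this
  rw [this]
  simp [map_sum, tmul_sum, sum_tmul, LinearMap.comp_apply, assoc_tmul, assoc_symm_tmul]

lemma eps_expand₁ (w z : H) :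
    ∑ p ∈ s, eps (w * p.1) * eps (p.2 * z) = eps (w * z) := by
  have := LinearMap.congr_fun hH.weak_counit₁ ((w ⊗ₜ[k] (1:H)) ⊗ₜ[k] z)
  simp only [LinearMap.comp_apply, LinearMap.rTensor_tmul, LinearMap.lTensor_tmul,
    LinearMap.mul'_apply, mul_one, regroup, LinearEquiv.coe_coe, hs] at this
  rw [this]
  simp [map_sum, tmul_sum, sum_tmul, LinearMap.comp_apply, assoc_tmul, assoc_symm_tmul]

lemma PiL_one : PiL k H delta S 1 = 1 := by
  rw [PiL_apply hH hs]
  simpa using counitl hH hs hs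

lemma PiR_one : PiR k H delta S 1 = 1 := by
  rw [PiR_apply hH hs]
  simpa using counitr hH hs hs

lemma eps_mul_PiL (w x : H) : eps (w * PiL k H delta S x) = eps (w * x) := by
  rw [PiL_apply hH hs, Finset.mul_sum]
  rw [map_sum]
  have : ∀ p ∈ s, eps (w * (eps (p.1 * x) • p.2)) = eps (w * p.2) * eps (p.1 * x) := by
    intro p _
    rw [mul_smul_comm, map_smul, smul_eq_mul, mul_comm]
  rw [Finset.sum_congr rfl this, eps_expand₂ hH hs]

lemma eps_PiR_mul (w x : H) : eps (PiR k H delta S w * x) = eps (w * x) := by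
  rw [PiR_apply hH hs, Finset.sum_mul, map_sum]
  have : ∀ p ∈ s, eps ((eps (w * p.2) • p.1) * x) = eps (w * p.2) * eps (p.1 * x) := by
    intro p _
    rw [smul_mul_assoc, map_smul, smul_eq_mul]
  rw [Finset.sum_congr rfl this, eps_expand₂ hH hs]

lemma PiL_PiL (x : H) : PiL k H delta S (PiL k H delta S x) = PiL k H delta S x := by
  calc PiL k H delta S (PiL k H delta S x)
      = ∑ p ∈ s, eps (p.1 * PiL k H delta S x) • p.2 := PiL_apply hH hs _
    _ = ∑ p ∈ s, eps (p.1 * x) • p.2 :=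
        Finset.sum_congr rfl fun p _ => by rw [eps_mul_PiL hH hs]
    _ = PiL k H delta S x := (PiL_apply hH hs x).symm

lemma PiL_mul_PiL (x z : H) :
    PiL k H delta S (x * PiL k H delta S z) = PiL k H delta S (x * z) := by
  calc PiL k H delta S (x * PiL k H delta S z)
      = ∑ p ∈ s, eps (p.1 * (x * PiL k H delta S z)) • p.2 := PiL_apply hH hs _
    _ = ∑ p ∈ s, eps (p.1 * (x * z)) • p.2 := by
        refine Finset.sum_congr rfl fun p _ => ?_
        rw [← mul_assoc, eps_mul_PiL hH hs, mul_assoc]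
    _ = PiL k H delta S (x * z) := (PiL_apply hH hs _).symm

lemma PiR_mul_PiR (z y : H) :
    PiR k H delta S (PiR k H delta S z * y) = PiR k H delta S (z * y) := by
  calc PiR k H delta S (PiR k H delta S z * y)
      = ∑ p ∈ s, eps (PiR k H delta S z * y * p.2) • p.1 := PiR_apply hH hs _
    _ = ∑ p ∈ s, eps (z * y * p.2) • p.1 := by
        refine Finset.sum_congr rfl fun p _ => ?_
        rw [mul_assoc, eps_PiR_mul hH hs, ← mul_assoc]
    _ = PiR k H delta S (z * y) := (PiR_apply hH hs _).symm

lemma D1a : ∑ p ∈ s, delta p.1 ⊗ₜ[k] p.2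
    = ∑ p ∈ s, ∑ q ∈ s, (p.1 ⊗ₜ[k] (p.2 * q.1)) ⊗ₜ[k] q.2 := by
  have := hH.weak_unit₁
  rw [hs] at this
  simpa [map_sum, sum_tmul, tmul_sum, Finset.sum_mul_sum, Algebra.TensorProduct.tmul_mul_tmul,
    assoc_symm_tmul] using this

lemma D1b : ∑ p ∈ s, delta p.1 ⊗ₜ[k] p.2
    = ∑ p ∈ s, ∑ q ∈ s, (p.1 ⊗ₜ[k] (q.1 * p.2)) ⊗ₜ[k] q.2 := by
  have := hH.weak_unit₂
  rw [hs] at this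
  rw [Finset.sum_comm]
  simpa [map_sum, sum_tmul, tmul_sum, Finset.sum_mul_sum, Algebra.TensorProduct.tmul_mul_tmul,
    assoc_symm_tmul] using this

lemma D1c : ∑ p ∈ s, p.1 ⊗ₜ[k] delta p.2
    = ∑ p ∈ s, ∑ q ∈ s, p.1 ⊗ₜ[k] ((p.2 * q.1) ⊗ₜ[k] q.2) := by
  have h0 := LinearMap.congr_fun hH.coassoc 1
  simp only [LinearMap.comp_apply] at h0
  rw [hs] at h0
  simp only [map_sum, LinearMap.rTensor_tmul, LinearMap.lTensor_tmul] at h0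
  calc ∑ p ∈ s, p.1 ⊗ₜ[k] delta p.2
      = ∑ p ∈ s, (TensorProduct.assoc k H H H) (delta p.1 ⊗ₜ[k] p.2) := h0.symm
    _ = (TensorProduct.assoc k H H H) (∑ p ∈ s, delta p.1 ⊗ₜ[k] p.2) := by rw [map_sum]
    _ = _ := by rw [D1a hH hs]; simp [map_sum, assoc_tmul]

lemma D1d : ∑ p ∈ s, p.1 ⊗ₜ[k] delta p.2
    = ∑ p ∈ s, ∑ q ∈ s, p.1 ⊗ₜ[k] ((q.1 * p.2) ⊗ₜ[k] q.2) := by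
  have h0 := LinearMap.congr_fun hH.coassoc 1
  simp only [LinearMap.comp_apply] at h0
  rw [hs] at h0
  simp only [map_sum, LinearMap.rTensor_tmul, LinearMap.lTensor_tmul] at h0
  calc ∑ p ∈ s, p.1 ⊗ₜ[k] delta p.2
      = ∑ p ∈ s, (TensorProduct.assoc k H H H) (delta p.1 ⊗ₜ[k] p.2) := h0.symm
    _ = (TensorProduct.assoc k H H H) (∑ p ∈ s, delta p.1 ⊗ₜ[k] p.2) := by rw [map_sum]
    _ = _ := by rw [D1b hH hs]; simp [map_sum, assoc_tmul]


lemma sum_tmul_PiL : ∑ p ∈ s, p.1 ⊗ₜ[k] PiL k H delta S p.2 = delta 1 := by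
  have h := congrArg
    (LinearMap.lTensor H ((TensorProduct.lid k H).toLinearMap ∘ₗ eps.rTensor H)) (D1d hH hs)
  simp only [map_sum, LinearMap.lTensor_tmul, LinearMap.comp_apply, LinearEquiv.coe_coe] at h
  have hL : ∀ p ∈ s, p.1 ⊗ₜ[k] (TensorProduct.lid k H) ((eps.rTensor H) (delta p.2))
      = p.1 ⊗ₜ[k] p.2 := fun p _ => by rw [hH.counit_left]
  rw [Finset.sum_congr rfl hL] at h
  calc ∑ p ∈ s, p.1 ⊗ₜ[k] PiL k H delta S p.2
      = ∑ p ∈ s, ∑ q ∈ s, p.1 ⊗ₜ[k]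
          (TensorProduct.lid k H) ((LinearMap.rTensor H eps) ((q.1 * p.2) ⊗ₜ[k] q.2)) := by
        refine Finset.sum_congr rfl fun p _ => ?_
        rw [PiL_apply hH hs, tmul_sum]
        exact Finset.sum_congr rfl fun q _ => by
          simp [LinearMap.rTensor_tmul, tmul_smul]
    _ = ∑ p ∈ s, p.1 ⊗ₜ[k] p.2 := h.symm
    _ = delta 1 := hs.symm

lemma sum_PiR_tmul : ∑ p ∈ s, PiR k H delta S p.1 ⊗ₜ[k] p.2 = delta 1 := by
  have h := congrArg
    (LinearMap.rTensor H ((TensorProduct.rid k H).toLinearMap ∘ₗ eps.lTensor H)) (D1b hH hs)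
  simp only [map_sum, LinearMap.rTensor_tmul, LinearMap.comp_apply, LinearEquiv.coe_coe] at h
  have hL : ∀ p ∈ s, (TensorProduct.rid k H) ((eps.lTensor H) (delta p.1)) ⊗ₜ[k] p.2
      = p.1 ⊗ₜ[k] p.2 := fun p _ => by rw [hH.counit_right]
  rw [Finset.sum_congr rfl hL] at h
  calc ∑ p ∈ s, PiR k H delta S p.1 ⊗ₜ[k] p.2
      = ∑ p ∈ s, ∑ q ∈ s,
          (TensorProduct.rid k H) ((LinearMap.lTensor H eps) (q.1 ⊗ₜ[k] (p.1 * q.2))) ⊗ₜ[k] p.2 := by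
        refine Finset.sum_congr rfl fun p _ => ?_
        rw [PiR_apply hH hs, sum_tmul]
        exact Finset.sum_congr rfl fun q _ => by
          simp [LinearMap.lTensor_tmul, smul_tmul']
    _ = ∑ p ∈ s, p.1 ⊗ₜ[k] p.2 := by rw [Finset.sum_comm]; exact h.symm
    _ = delta 1 := hs.symm

lemma delta_PiL (x : H) : delta (PiL k H delta S x)
    = ∑ p ∈ s, (PiL k H delta S x * p.1) ⊗ₜ[k] p.2 := by
  have h := congrArg ((TensorProduct.lid k (H ⊗[k] H)).toLinearMap
    ∘ₗ (eps ∘ₗ LinearMap.mulRight k x).rTensor (H ⊗[k] H)) (D1c hH hs)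
  simp only [map_sum, LinearMap.comp_apply, LinearMap.rTensor_tmul, LinearEquiv.coe_coe,
    TensorProduct.lid_tmul, LinearMap.mulRight_apply] at h
  calc delta (PiL k H delta S x) = ∑ p ∈ s, eps (p.1 * x) • delta p.2 := by
        rw [PiL_apply hH hs, map_sum]; exact Finset.sum_congr rfl fun p _ => map_smul _ _ _
    _ = ∑ p ∈ s, ∑ q ∈ s, eps (p.1 * x) • ((p.2 * q.1) ⊗ₜ[k] q.2) := by
        rw [h]
    _ = ∑ q ∈ s, (PiL k H delta S x * q.1) ⊗ₜ[k] q.2 := by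
        rw [Finset.sum_comm, PiL_apply hH hs]
        refine Finset.sum_congr rfl fun q _ => ?_
        rw [Finset.sum_mul, sum_tmul]
        exact Finset.sum_congr rfl fun p _ => by rw [smul_mul_assoc, smul_tmul']

lemma delta_PiL' (x : H) : delta (PiL k H delta S x)
    = ∑ p ∈ s, (p.1 * PiL k H delta S x) ⊗ₜ[k] p.2 := by
  have h := congrArg ((TensorProduct.lid k (H ⊗[k] H)).toLinearMap
    ∘ₗ (eps ∘ₗ LinearMap.mulRight k x).rTensor (H ⊗[k] H)) (D1d hH hs)
  simp only [map_sum, LinearMap.comp_apply, LinearMap.rTensor_tmul, LinearEquiv.coe_coe,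
    TensorProduct.lid_tmul, LinearMap.mulRight_apply] at h
  calc delta (PiL k H delta S x) = ∑ p ∈ s, eps (p.1 * x) • delta p.2 := by
        rw [PiL_apply hH hs, map_sum]; exact Finset.sum_congr rfl fun p _ => map_smul _ _ _
    _ = ∑ p ∈ s, ∑ q ∈ s, eps (p.1 * x) • ((q.1 * p.2) ⊗ₜ[k] q.2) := by
        rw [h]
    _ = ∑ q ∈ s, (q.1 * PiL k H delta S x) ⊗ₜ[k] q.2 := by
        rw [Finset.sum_comm, PiL_apply hH hs]
        refine Finset.sum_congr rfl fun q _ => ?_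
        rw [Finset.mul_sum, sum_tmul]
        exact Finset.sum_congr rfl fun p _ => by rw [mul_smul_comm, smul_tmul']

lemma delta_PiR (x : H) : delta (PiR k H delta S x)
    = ∑ p ∈ s, p.1 ⊗ₜ[k] (p.2 * PiR k H delta S x) := by
  have h := congrArg ((TensorProduct.rid k (H ⊗[k] H)).toLinearMap
    ∘ₗ (eps ∘ₗ LinearMap.mulLeft k x).lTensor (H ⊗[k] H)) (D1a hH hs)
  simp only [map_sum, LinearMap.comp_apply, LinearMap.lTensor_tmul, LinearEquiv.coe_coe,
    TensorProduct.rid_tmul, LinearMap.mulLeft_apply] at h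
  calc delta (PiR k H delta S x) = ∑ p ∈ s, eps (x * p.2) • delta p.1 := by
        rw [PiR_apply hH hs, map_sum]; exact Finset.sum_congr rfl fun p _ => map_smul _ _ _
    _ = ∑ q ∈ s, ∑ p ∈ s, eps (x * q.2) • (p.1 ⊗ₜ[k] (p.2 * q.1)) := by
        rw [h, Finset.sum_comm]
    _ = ∑ p ∈ s, p.1 ⊗ₜ[k] (p.2 * PiR k H delta S x) := by
        rw [Finset.sum_comm, PiR_apply hH hs]
        refine Finset.sum_congr rfl fun p _ => ?_
        rw [Finset.mul_sum, tmul_sum]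
        exact Finset.sum_congr rfl fun q _ => by rw [mul_smul_comm, tmul_smul]

lemma delta_PiR' (x : H) : delta (PiR k H delta S x)
    = ∑ p ∈ s, p.1 ⊗ₜ[k] (PiR k H delta S x * p.2) := by
  have h := congrArg ((TensorProduct.rid k (H ⊗[k] H)).toLinearMap
    ∘ₗ (eps ∘ₗ LinearMap.mulLeft k x).lTensor (H ⊗[k] H)) (D1b hH hs)
  simp only [map_sum, LinearMap.comp_apply, LinearMap.lTensor_tmul, LinearEquiv.coe_coe,
    TensorProduct.rid_tmul, LinearMap.mulLeft_apply] at h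
  calc delta (PiR k H delta S x) = ∑ p ∈ s, eps (x * p.2) • delta p.1 := by
        rw [PiR_apply hH hs, map_sum]; exact Finset.sum_congr rfl fun p _ => map_smul _ _ _
    _ = ∑ q ∈ s, ∑ p ∈ s, eps (x * q.2) • (p.1 ⊗ₜ[k] (q.1 * p.2)) := by
        rw [h, Finset.sum_comm]
    _ = ∑ p ∈ s, p.1 ⊗ₜ[k] (PiR k H delta S x * p.2) := by
        rw [Finset.sum_comm, PiR_apply hH hs]
        refine Finset.sum_congr rfl fun p _ => ?_
        rw [Finset.sum_mul, tmul_sum]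
        exact Finset.sum_congr rfl fun q _ => by rw [smul_mul_assoc, tmul_smul]


lemma swap27 (x : H) : ∑ p ∈ s, p.1 ⊗ₜ[k] delta (x * p.2)
    = ∑ p ∈ s, p.1 ⊗ₜ[k] (delta x * (p.2 ⊗ₜ[k] (1:H))) := by
  have h := congrArg (LinearMap.lTensor H (LinearMap.mulLeft k (delta x))) (D1d hH hs)
  simp only [map_sum, LinearMap.lTensor_tmul, LinearMap.mulLeft_apply] at h
  have hdx : delta x * delta 1 = delta x := by rw [← hH.delta_mul, mul_one]
  calc ∑ p ∈ s, p.1 ⊗ₜ[k] delta (x * p.2)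
      = ∑ p ∈ s, p.1 ⊗ₜ[k] (delta x * delta p.2) :=
        Finset.sum_congr rfl fun p _ => by rw [hH.delta_mul]
    _ = ∑ p ∈ s, ∑ q ∈ s, p.1 ⊗ₜ[k] (delta x * ((q.1 * p.2) ⊗ₜ[k] q.2)) := h
    _ = ∑ p ∈ s, p.1 ⊗ₜ[k] (delta x * (p.2 ⊗ₜ[k] (1:H))) := by
        refine Finset.sum_congr rfl fun p _ => ?_
        rw [← tmul_sum]
        congr 1
        have : ∀ q ∈ s, delta x * ((q.1 * p.2) ⊗ₜ[k] q.2)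
            = (delta x * (q.1 ⊗ₜ[k] q.2)) * (p.2 ⊗ₜ[k] (1:H)) := fun q _ => by
          rw [mul_assoc, Algebra.TensorProduct.tmul_mul_tmul, mul_one]
        rw [Finset.sum_congr rfl this, ← Finset.sum_mul, ← Finset.mul_sum, ← hs, hdx]

lemma swap27' (y : H) : ∑ p ∈ s, delta (p.1 * y) ⊗ₜ[k] p.2
    = ∑ p ∈ s, (((1:H) ⊗ₜ[k] p.1) * delta y) ⊗ₜ[k] p.2 := by
  have h := congrArg (LinearMap.rTensor H (LinearMap.mulRight k (delta y))) (D1b hH hs)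
  simp only [map_sum, LinearMap.rTensor_tmul, LinearMap.mulRight_apply] at h
  have hdy : delta 1 * delta y = delta y := by rw [← hH.delta_mul, one_mul]
  calc ∑ p ∈ s, delta (p.1 * y) ⊗ₜ[k] p.2
      = ∑ p ∈ s, (delta p.1 * delta y) ⊗ₜ[k] p.2 :=
        Finset.sum_congr rfl fun p _ => by rw [hH.delta_mul]
    _ = ∑ p ∈ s, ∑ q ∈ s, ((p.1 ⊗ₜ[k] (q.1 * p.2)) * delta y) ⊗ₜ[k] q.2 := h
    _ = ∑ q ∈ s, (((1:H) ⊗ₜ[k] q.1) * delta y) ⊗ₜ[k] q.2 := by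
        rw [Finset.sum_comm]
        refine Finset.sum_congr rfl fun q _ => ?_
        rw [← sum_tmul]
        congr 1
        have : ∀ p ∈ s, (p.1 ⊗ₜ[k] (q.1 * p.2)) * delta y
            = ((1:H) ⊗ₜ[k] q.1) * ((p.1 ⊗ₜ[k] p.2) * delta y) := fun p _ => by
          rw [← mul_assoc, Algebra.TensorProduct.tmul_mul_tmul, one_mul]
        rw [Finset.sum_congr rfl this, ← Finset.mul_sum, ← Finset.sum_mul, ← hs, hdy]

lemma lTensor_PiL_delta (x : H) :
    LinearMap.lTensor H (PiL k H delta S) (delta x) = ∑ p ∈ s, (p.1 * x) ⊗ₜ[k] p.2 := by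
  obtain ⟨t, ht⟩ := TensorProduct.exists_finset (delta x)
  have h := congrArg
    (LinearMap.rTensor H ((TensorProduct.rid k H).toLinearMap ∘ₗ eps.lTensor H))
    (swap27' hH hs x)
  simp only [map_sum, LinearMap.rTensor_tmul, LinearMap.comp_apply, LinearEquiv.coe_coe] at h
  have hL : ∀ p ∈ s,
      (TensorProduct.rid k H) ((eps.lTensor H) (delta (p.1 * x))) ⊗ₜ[k] p.2
      = (p.1 * x) ⊗ₜ[k] p.2 := fun p _ => by rw [hH.counit_right]
  rw [Finset.sum_congr rfl hL] at h
  calc LinearMap.lTensor H (PiL k H delta S) (delta x)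
      = ∑ r ∈ t, ∑ p ∈ s, eps (p.1 * r.2) • (r.1 ⊗ₜ[k] p.2) := by
        rw [ht, map_sum]
        refine Finset.sum_congr rfl fun r _ => ?_
        rw [LinearMap.lTensor_tmul, PiL_apply hH hs, tmul_sum]
        exact Finset.sum_congr rfl fun p _ => by rw [tmul_smul]
    _ = ∑ p ∈ s, (TensorProduct.rid k H)
          ((eps.lTensor H) (((1:H) ⊗ₜ[k] p.1) * delta x)) ⊗ₜ[k] p.2 := by
        rw [Finset.sum_comm]
        refine Finset.sum_congr rfl fun p _ => ?_
        rw [ht, Finset.mul_sum, map_sum, map_sum, sum_tmul]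
        refine Finset.sum_congr rfl fun r _ => ?_
        rw [Algebra.TensorProduct.tmul_mul_tmul, one_mul, LinearMap.lTensor_tmul,
          TensorProduct.rid_tmul, smul_tmul']
    _ = ∑ p ∈ s, (p.1 * x) ⊗ₜ[k] p.2 := h.symm

lemma rTensor_PiR_delta (x : H) :
    LinearMap.rTensor H (PiR k H delta S) (delta x) = ∑ p ∈ s, p.1 ⊗ₜ[k] (x * p.2) := by
  obtain ⟨t, ht⟩ := TensorProduct.exists_finset (delta x)
  have h := congrArg
    (LinearMap.lTensor H ((TensorProduct.lid k H).toLinearMap ∘ₗ eps.rTensor H))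
    (swap27 hH hs x)
  simp only [map_sum, LinearMap.lTensor_tmul, LinearMap.comp_apply, LinearEquiv.coe_coe] at h
  have hL : ∀ p ∈ s,
      p.1 ⊗ₜ[k] (TensorProduct.lid k H) ((eps.rTensor H) (delta (x * p.2)))
      = p.1 ⊗ₜ[k] (x * p.2) := fun p _ => by rw [hH.counit_left]
  rw [Finset.sum_congr rfl hL] at h
  calc LinearMap.rTensor H (PiR k H delta S) (delta x)
      = ∑ r ∈ t, ∑ p ∈ s, eps (r.1 * p.2) • (p.1 ⊗ₜ[k] r.2) := by
        rw [ht, map_sum]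
        refine Finset.sum_congr rfl fun r _ => ?_
        rw [LinearMap.rTensor_tmul, PiR_apply hH hs, sum_tmul]
        exact Finset.sum_congr rfl fun p _ => by rw [smul_tmul']
    _ = ∑ p ∈ s, p.1 ⊗ₜ[k] (TensorProduct.lid k H)
          ((eps.rTensor H) (delta x * (p.2 ⊗ₜ[k] (1:H)))) := by
        rw [Finset.sum_comm]
        refine Finset.sum_congr rfl fun p _ => ?_
        rw [ht, Finset.sum_mul, map_sum, map_sum, tmul_sum]
        refine Finset.sum_congr rfl fun r _ => ?_
        rw [Algebra.TensorProduct.tmul_mul_tmul, mul_one, LinearMap.rTensor_tmul,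
          TensorProduct.lid_tmul, tmul_smul]
    _ = ∑ p ∈ s, p.1 ⊗ₜ[k] (x * p.2) := h.symm


omit hH hs in
lemma PiL_def (w : H) :
    PiL k H delta S w = LinearMap.mul' k H ((S.lTensor H) (delta w)) := rfl

omit hH hs in
lemma PiR_def (w : H) :
    PiR k H delta S w = LinearMap.mul' k H ((S.rTensor H) (delta w)) := rfl

lemma muS_deltaMul (x z : H) :
    LinearMap.mul' k H ((S.lTensor H) (delta x * (PiL k H delta S z ⊗ₜ[k] (1:H))))
      = PiL k H delta S (x * z) := by
  have h := congrArg ((TensorProduct.lid k H).toLinearMap ∘ₗ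
      (TensorProduct.map (eps ∘ₗ LinearMap.mulRight k z)
        (LinearMap.mul' k H ∘ₗ S.lTensor H))) (swap27 hH hs x)
  simp only [map_sum, LinearMap.comp_apply, TensorProduct.map_tmul, LinearEquiv.coe_coe,
    TensorProduct.lid_tmul, LinearMap.mulRight_apply] at h
  calc LinearMap.mul' k H ((S.lTensor H) (delta x * (PiL k H delta S z ⊗ₜ[k] (1:H))))
      = ∑ p ∈ s, eps (p.1 * z) •
          LinearMap.mul' k H ((S.lTensor H) (delta x * (p.2 ⊗ₜ[k] (1:H)))) := by
        rw [PiL_apply hH hs z, sum_tmul, Finset.mul_sum, map_sum, map_sum]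
        refine Finset.sum_congr rfl fun p _ => ?_
        rw [← smul_tmul', mul_smul_comm, map_smul, map_smul]
    _ = ∑ p ∈ s, eps (p.1 * z) •
          LinearMap.mul' k H ((S.lTensor H) (delta (x * p.2))) := h.symm
    _ = PiL k H delta S (x * PiL k H delta S z) := by
        rw [PiL_apply hH hs z, Finset.mul_sum, map_sum]
        exact Finset.sum_congr rfl fun p _ => by
          rw [mul_smul_comm, map_smul, PiL_def]
    _ = PiL k H delta S (x * z) := PiL_mul_PiL hH hs x z

lemma muS_deltaMul' (z y : H) :
    LinearMap.mul' k H ((S.rTensor H) ((((1:H) ⊗ₜ[k] PiR k H delta S z)) * delta y))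
      = PiR k H delta S (z * y) := by
  have h := congrArg ((TensorProduct.rid k H).toLinearMap ∘ₗ
      (TensorProduct.map (LinearMap.mul' k H ∘ₗ S.rTensor H)
        (eps ∘ₗ LinearMap.mulLeft k z))) (swap27' hH hs y)
  simp only [map_sum, LinearMap.comp_apply, TensorProduct.map_tmul, LinearEquiv.coe_coe,
    TensorProduct.rid_tmul, LinearMap.mulLeft_apply] at h
  calc LinearMap.mul' k H ((S.rTensor H) ((((1:H) ⊗ₜ[k] PiR k H delta S z)) * delta y))
      = ∑ p ∈ s, eps (z * p.2) •
          LinearMap.mul' k H ((S.rTensor H) (((1:H) ⊗ₜ[k] p.1) * delta y)) := by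
        rw [PiR_apply hH hs z, tmul_sum, Finset.sum_mul, map_sum, map_sum]
        refine Finset.sum_congr rfl fun p _ => ?_
        rw [tmul_smul, smul_mul_assoc, map_smul, map_smul]
    _ = ∑ p ∈ s, eps (z * p.2) •
          LinearMap.mul' k H ((S.rTensor H) (delta (p.1 * y))) := h.symm
    _ = PiR k H delta S (PiR k H delta S z * y) := by
        rw [PiR_apply hH hs z, Finset.sum_mul, map_sum]
        exact Finset.sum_congr rfl fun p _ => by
          rw [smul_mul_assoc, map_smul, PiR_def]
    _ = PiR k H delta S (z * y) := PiR_mul_PiR hH hs z y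

lemma PiR_comm_PiL (z w : H) :
    PiR k H delta S z * PiL k H delta S w = PiL k H delta S w * PiR k H delta S z := by
  have E := (D1a hH hs).symm.trans (D1b hH hs)
  have h := congrArg ((TensorProduct.rid k H).toLinearMap
    ∘ₗ (LinearMap.lTensor H (eps ∘ₗ LinearMap.mulLeft k z))
    ∘ₗ (LinearMap.rTensor H ((TensorProduct.lid k H).toLinearMap
        ∘ₗ (LinearMap.rTensor H (eps ∘ₗ LinearMap.mulRight k w))))) E
  simp only [map_sum, LinearMap.comp_apply, LinearMap.rTensor_tmul, LinearMap.lTensor_tmul,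
    LinearEquiv.coe_coe, TensorProduct.lid_tmul, TensorProduct.rid_tmul,
    LinearMap.mulLeft_apply, LinearMap.mulRight_apply, smul_tmul', map_smul, smul_smul]
    at h
  have hL : PiR k H delta S z * PiL k H delta S w
      = ∑ p ∈ s, ∑ q ∈ s, (eps (z * q.2) * eps (p.1 * w)) • (q.1 * p.2) := by
    rw [PiR_apply hH hs, PiL_apply hH hs, Finset.sum_mul_sum, Finset.sum_comm]
    refine Finset.sum_congr rfl fun p _ => Finset.sum_congr rfl fun q _ => ?_
    rw [smul_mul_assoc, mul_smul_comm, smul_smul]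
  have hR : PiL k H delta S w * PiR k H delta S z
      = ∑ p ∈ s, ∑ q ∈ s, (eps (z * q.2) * eps (p.1 * w)) • (p.2 * q.1) := by
    rw [PiR_apply hH hs, PiL_apply hH hs, Finset.sum_mul_sum]
    refine Finset.sum_congr rfl fun p _ => Finset.sum_congr rfl fun q _ => ?_
    rw [smul_mul_assoc, mul_smul_comm, smul_smul, mul_comm (eps (p.1 * w))]
  rw [hL, hR]
  exact h.symm

lemma sum_PiR_S {w : H} {t : Finset (H × H)} (ht : delta w = ∑ p ∈ t, p.1 ⊗ₜ[k] p.2) :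
    ∑ p ∈ t, PiR k H delta S p.1 * S p.2 = S w := by
  have h := LinearMap.congr_fun hH.S_mul_S w
  simp only [LinearMap.comp_apply] at h
  rw [ht] at h
  simp only [map_sum, LinearMap.rTensor_tmul, LinearMap.lTensor_tmul, LinearMap.comp_apply,
    LinearMap.mul'_apply] at h
  rw [← h]
  exact Finset.sum_congr rfl fun p _ => by rw [PiR_def]

lemma coassoc_rep {w : H} {t : Finset (H × H)} (ht : delta w = ∑ p ∈ t, p.1 ⊗ₜ[k] p.2) :
    ∑ p ∈ t, p.1 ⊗ₜ[k] delta p.2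
      = ∑ p ∈ t, (TensorProduct.assoc k H H H) (delta p.1 ⊗ₜ[k] p.2) := by
  have h0 := LinearMap.congr_fun hH.coassoc w
  simp only [LinearMap.comp_apply] at h0
  rw [ht] at h0
  simp only [map_sum, LinearMap.rTensor_tmul, LinearMap.lTensor_tmul] at h0
  exact h0.symm

lemma sum_S_PiL {w : H} {t : Finset (H × H)} (ht : delta w = ∑ p ∈ t, p.1 ⊗ₜ[k] p.2) :
    ∑ p ∈ t, S p.1 * PiL k H delta S p.2 = S w := by
  have hmap : (LinearMap.mul' k H ∘ₗ (TensorProduct.map S (LinearMap.mul' k H ∘ₗ S.lTensor H)))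
      ∘ₗ (TensorProduct.assoc k H H H).toLinearMap
      = LinearMap.mul' k H ∘ₗ (TensorProduct.map (LinearMap.mul' k H ∘ₗ S.rTensor H) S) := by
    apply TensorProduct.ext_threefold
    intro u v c
    simp [mul_assoc]
  have key := congrArg (LinearMap.mul' k H
    ∘ₗ (TensorProduct.map S (LinearMap.mul' k H ∘ₗ S.lTensor H))) (coassoc_rep hH hs ht)
  simp only [map_sum] at key
  calc ∑ p ∈ t, S p.1 * PiL k H delta S p.2
      = ∑ p ∈ t, (LinearMap.mul' k H
          ∘ₗ (TensorProduct.map S (LinearMap.mul' k H ∘ₗ S.lTensor H)))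
          (p.1 ⊗ₜ[k] delta p.2) := by
        refine Finset.sum_congr rfl fun p _ => ?_
        simp only [LinearMap.comp_apply, TensorProduct.map_tmul, LinearMap.mul'_apply]
        rw [PiL_def]
    _ = ∑ p ∈ t, (LinearMap.mul' k H
          ∘ₗ (TensorProduct.map S (LinearMap.mul' k H ∘ₗ S.lTensor H)))
          ((TensorProduct.assoc k H H H) (delta p.1 ⊗ₜ[k] p.2)) := key
    _ = ∑ p ∈ t, PiR k H delta S p.1 * S p.2 := by
        refine Finset.sum_congr rfl fun p _ => ?_
        have := LinearMap.congr_fun hmap (delta p.1 ⊗ₜ[k] p.2)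
        simp only [LinearMap.comp_apply, LinearEquiv.coe_coe] at this ⊢
        rw [this]
        simp only [TensorProduct.map_tmul, LinearMap.comp_apply, LinearMap.mul'_apply]
        rw [PiR_def]
    _ = S w := sum_PiR_S hH hs ht


lemma muSPiL (w : H) :
    LinearMap.mul' k H ((TensorProduct.map S (PiL k H delta S)) (delta w)) = S w := by
  obtain ⟨t, ht⟩ := TensorProduct.exists_finset (delta w)
  rw [ht, map_sum, map_sum]
  simp only [TensorProduct.map_tmul, LinearMap.mul'_apply]
  exact sum_S_PiL hH hs ht

lemma muPiRS (w : H) :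
    LinearMap.mul' k H ((TensorProduct.map (PiR k H delta S) S) (delta w)) = S w := by
  obtain ⟨t, ht⟩ := TensorProduct.exists_finset (delta w)
  rw [ht, map_sum, map_sum]
  simp only [TensorProduct.map_tmul, LinearMap.mul'_apply]
  exact sum_PiR_S hH hs ht

lemma K1a (x y : H) {P Q : Finset (H × H)}
    (hP : delta x = ∑ p ∈ P, p.1 ⊗ₜ[k] p.2) (hQ : delta y = ∑ q ∈ Q, q.1 ⊗ₜ[k] q.2) :
    S (x * y) = ∑ p ∈ P, ∑ q ∈ Q,
      PiR k H delta S (p.1 * q.1) * (S q.2 * S p.2) := by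
  have hrep : ∀ z : H × H, ∃ t : Finset (H × H), delta z.1 = ∑ r ∈ t, r.1 ⊗ₜ[k] r.2 :=
    fun z => TensorProduct.exists_finset _
  choose T hT using hrep
  have hxy : delta (x * y) = ∑ p ∈ P, ∑ q ∈ Q, (p.1 * q.1) ⊗ₜ[k] (p.2 * q.2) := by
    rw [hH.delta_mul, hP, hQ, Finset.sum_mul_sum]
    simp [Algebra.TensorProduct.tmul_mul_tmul]
  have Ex := coassoc_rep hH hs hP
  have Ey := coassoc_rep hH hs hQ
  have step12 : S (x * y) = ∑ q ∈ Q, ∑ p ∈ P, S (p.1 * q.1) *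
      LinearMap.mul' k H ((S.lTensor H)
        (delta p.2 * (PiL k H delta S q.2 ⊗ₜ[k] (1:H)))) := by
    rw [← muSPiL hH hs (x*y), hxy, map_sum, map_sum]
    rw [Finset.sum_comm]
    refine Finset.sum_congr rfl fun q _ => ?_
    rw [map_sum, map_sum]
    refine Finset.sum_congr rfl fun p _ => ?_
    rw [TensorProduct.map_tmul, LinearMap.mul'_apply, muS_deltaMul hH hs]
  have step3 : S (x * y) = ∑ q ∈ Q, ∑ p ∈ P, ∑ r ∈ T p,
      S (r.1 * q.1) * ((r.2 * PiL k H delta S q.2) * S p.2) := by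
    rw [step12]
    refine Finset.sum_congr rfl fun q _ => ?_
    have hmapq := congrArg (LinearMap.mul' k H ∘ₗ
      (TensorProduct.map (S ∘ₗ LinearMap.mulRight k q.1)
        (LinearMap.mul' k H ∘ₗ S.lTensor H
          ∘ₗ LinearMap.mulRight k (PiL k H delta S q.2 ⊗ₜ[k] (1:H))))) Ex
    simp only [map_sum, LinearMap.comp_apply, TensorProduct.map_tmul,
      LinearMap.mul'_apply, LinearMap.mulRight_apply] at hmapq
    rw [hmapq]
    refine Finset.sum_congr rfl fun p _ => ?_
    rw [hT p, sum_tmul]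
    simp only [map_sum]
    refine Finset.sum_congr rfl fun r _ => ?_
    rw [assoc_tmul]
    simp only [LinearMap.comp_apply, TensorProduct.map_tmul, LinearMap.mul'_apply,
      LinearMap.mulRight_apply, Algebra.TensorProduct.tmul_mul_tmul, mul_one,
      LinearMap.lTensor_tmul]
  have step4 : S (x * y) = ∑ p ∈ P, ∑ r ∈ T p, ∑ q ∈ Q, ∑ u ∈ T q,
      S (r.1 * u.1) * ((r.2 * (u.2 * S q.2)) * S p.2) := by
    rw [step3, Finset.sum_comm]
    refine Finset.sum_congr rfl fun p _ => ?_
    rw [Finset.sum_comm]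
    refine Finset.sum_congr rfl fun r _ => ?_
    have hmap := congrArg ((LinearMap.mul' k H ∘ₗ
      (TensorProduct.map (S ∘ₗ LinearMap.mulLeft k r.1)
        (LinearMap.mulRight k (S p.2) ∘ₗ LinearMap.mulLeft k r.2)))
      ∘ₗ (LinearMap.lTensor H (LinearMap.mul' k H ∘ₗ S.lTensor H))) Ey
    simp only [map_sum, LinearMap.comp_apply, LinearMap.lTensor_tmul,
      TensorProduct.map_tmul, LinearMap.mul'_apply, LinearMap.mulLeft_apply,
      LinearMap.mulRight_apply] at hmap
    calc ∑ q ∈ Q, S (r.1 * q.1) * ((r.2 * PiL k H delta S q.2) * S p.2)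
        = ∑ q ∈ Q, S (r.1 * q.1) *
            (r.2 * LinearMap.mul' k H ((S.lTensor H) (delta q.2)) * S p.2) := by
          refine Finset.sum_congr rfl fun q _ => ?_
          rw [PiL_def]
      _ = ∑ q ∈ Q, ∑ u ∈ T q,
            S (r.1 * u.1) * ((r.2 * (u.2 * S q.2)) * S p.2) := by
          rw [hmap]
          refine Finset.sum_congr rfl fun q _ => ?_
          rw [hT q, sum_tmul]
          simp only [map_sum]
          refine Finset.sum_congr rfl fun u _ => ?_
          rw [assoc_tmul]
          simp only [LinearMap.comp_apply, LinearMap.lTensor_tmul,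
            TensorProduct.map_tmul, LinearMap.mul'_apply, LinearMap.mulLeft_apply,
            LinearMap.mulRight_apply]
  have step5 : S (x * y) = ∑ p ∈ P, ∑ q ∈ Q,
      LinearMap.mul' k H ((S.rTensor H) (delta p.1 * delta q.1)) * (S q.2 * S p.2) := by
    rw [step4]
    refine Finset.sum_congr rfl fun p _ => ?_
    rw [Finset.sum_comm]
    refine Finset.sum_congr rfl fun q _ => ?_
    have fold : ∀ r : H × H,
        LinearMap.mul' k H ((S.rTensor H) ((r.1 ⊗ₜ[k] r.2) * delta q.1))
        = ∑ u ∈ T q, S (r.1 * u.1) * (r.2 * u.2) := by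
      intro r
      rw [hT q, Finset.mul_sum, map_sum, map_sum]
      refine Finset.sum_congr rfl fun u _ => ?_
      rw [Algebra.TensorProduct.tmul_mul_tmul, LinearMap.rTensor_tmul,
        LinearMap.mul'_apply]
    calc ∑ r ∈ T p, ∑ u ∈ T q,
          S (r.1 * u.1) * ((r.2 * (u.2 * S q.2)) * S p.2)
        = ∑ r ∈ T p, ∑ u ∈ T q,
            (S (r.1 * u.1) * (r.2 * u.2)) * (S q.2 * S p.2) := by
          refine Finset.sum_congr rfl fun r _ => Finset.sum_congr rfl fun u _ => ?_
          simp only [mul_assoc]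
      _ = ∑ r ∈ T p,
            LinearMap.mul' k H ((S.rTensor H) ((r.1 ⊗ₜ[k] r.2) * delta q.1))
              * (S q.2 * S p.2) := by
          refine Finset.sum_congr rfl fun r _ => ?_
          rw [fold r, Finset.sum_mul]
      _ = LinearMap.mul' k H ((S.rTensor H) (delta p.1 * delta q.1))
            * (S q.2 * S p.2) := by
          conv_rhs => rw [hT p, Finset.sum_mul, map_sum, map_sum, Finset.sum_mul]
  rw [step5]
  refine Finset.sum_congr rfl fun p _ => Finset.sum_congr rfl fun q _ => ?_
  rw [← hH.delta_mul, ← PiR_def]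


lemma K1b (x y : H) {P Q : Finset (H × H)}
    (hP : delta x = ∑ p ∈ P, p.1 ⊗ₜ[k] p.2) (hQ : delta y = ∑ q ∈ Q, q.1 ⊗ₜ[k] q.2) :
    ∑ p ∈ P, ∑ q ∈ Q, PiR k H delta S (p.1 * q.1) * (S q.2 * S p.2) = S y * S x := by
  have hrep : ∀ z : H × H, ∃ t : Finset (H × H), delta z.2 = ∑ r ∈ t, r.1 ⊗ₜ[k] r.2 :=
    fun z => TensorProduct.exists_finset _
  choose U hU using hrep
  have Ey := coassoc_rep hH hs hQ
  have Ey' : ∑ q ∈ Q, delta q.1 ⊗ₜ[k] q.2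
      = ∑ q ∈ Q, (TensorProduct.assoc k H H H).symm (q.1 ⊗ₜ[k] delta q.2) := by
    have := congrArg (TensorProduct.assoc k H H H).symm.toLinearMap Ey
    simp only [map_sum, LinearEquiv.coe_coe] at this
    simpa using this.symm
  calc ∑ p ∈ P, ∑ q ∈ Q, PiR k H delta S (p.1 * q.1) * (S q.2 * S p.2)
      = ∑ p ∈ P, ∑ q ∈ Q,
          LinearMap.mul' k H ((S.rTensor H)
            (((1:H) ⊗ₜ[k] PiR k H delta S p.1) * delta q.1)) * (S q.2 * S p.2) := by
        refine Finset.sum_congr rfl fun p _ => Finset.sum_congr rfl fun q _ => ?_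
        rw [muS_deltaMul' hH hs]
    _ = ∑ p ∈ P, ∑ q ∈ Q, ∑ u ∈ U q,
          (S q.1 * (PiR k H delta S p.1 * u.1)) * (S u.2 * S p.2) := by
        refine Finset.sum_congr rfl fun p _ => ?_
        have hmap := congrArg (LinearMap.mul' k H ∘ₗ
          (TensorProduct.map
            (LinearMap.mul' k H ∘ₗ S.rTensor H
              ∘ₗ LinearMap.mulLeft k ((1:H) ⊗ₜ[k] PiR k H delta S p.1))
            (LinearMap.mulRight k (S p.2) ∘ₗ S))) Ey'
        simp only [map_sum, LinearMap.comp_apply, TensorProduct.map_tmul,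
          LinearMap.mul'_apply, LinearMap.mulLeft_apply, LinearMap.mulRight_apply] at hmap
        rw [hmap]
        refine Finset.sum_congr rfl fun q _ => ?_
        rw [hU q, tmul_sum]
        simp only [map_sum]
        refine Finset.sum_congr rfl fun u _ => ?_
        rw [assoc_symm_tmul]
        simp only [LinearMap.comp_apply, TensorProduct.map_tmul, LinearMap.mul'_apply,
          LinearMap.mulLeft_apply, LinearMap.mulRight_apply,
          Algebra.TensorProduct.tmul_mul_tmul, one_mul, LinearMap.rTensor_tmul]
    _ = ∑ p ∈ P, ∑ q ∈ Q,
          S q.1 * (PiR k H delta S p.1 * (PiL k H delta S q.2 * S p.2)) := by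
        refine Finset.sum_congr rfl fun p _ => Finset.sum_congr rfl fun q _ => ?_
        have : ∀ u ∈ U q, (S q.1 * (PiR k H delta S p.1 * u.1)) * (S u.2 * S p.2)
            = S q.1 * (PiR k H delta S p.1 * ((u.1 * S u.2) * S p.2)) := fun u _ => by
          simp only [mul_assoc]
        have hPiL : (∑ u ∈ U q, u.1 * S u.2) = PiL k H delta S q.2 := by
          rw [PiL_def, hU q, map_sum, map_sum]
          exact Finset.sum_congr rfl fun u _ => by
            rw [LinearMap.lTensor_tmul, LinearMap.mul'_apply]
        rw [Finset.sum_congr rfl this, ← Finset.mul_sum, ← Finset.mul_sum,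
          ← Finset.sum_mul, hPiL]
    _ = ∑ p ∈ P, ∑ q ∈ Q, (S q.1 * PiL k H delta S q.2)
          * (PiR k H delta S p.1 * S p.2) := by
        refine Finset.sum_congr rfl fun p _ => Finset.sum_congr rfl fun q _ => ?_
        rw [← mul_assoc (PiR k H delta S p.1), PiR_comm_PiL hH hs]
        simp only [mul_assoc]
    _ = S y * S x := by
        have hq : ∀ p : H × H, ∑ q ∈ Q, (S q.1 * PiL k H delta S q.2)
            * (PiR k H delta S p.1 * S p.2)
            = S y * (PiR k H delta S p.1 * S p.2) := fun p => by
          rw [← Finset.sum_mul, sum_S_PiL hH hs hQ]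
        rw [Finset.sum_congr rfl fun p _ => hq p, ← Finset.mul_sum, sum_PiR_S hH hs hP]

lemma S_antimul (x y : H) : S (x * y) = S y * S x := by
  obtain ⟨P, hP⟩ := TensorProduct.exists_finset (delta x)
  obtain ⟨Q, hQ⟩ := TensorProduct.exists_finset (delta y)
  rw [K1a hH hs x y hP hQ, K1b hH hs x y hP hQ]


lemma S_PiL (x : H) : S (PiL k H delta S x) = PiR k H delta S (PiL k H delta S x) := by
  have h1 : PiR k H delta S (PiL k H delta S x)
      = ∑ j ∈ s, S (j.1 * PiL k H delta S x) * j.2 := by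
    rw [PiR_def, delta_PiL' hH hs, map_sum, map_sum]
    exact Finset.sum_congr rfl fun j _ => by
      rw [LinearMap.rTensor_tmul, LinearMap.mul'_apply]
  have h2 : (∑ j ∈ s, S j.1 * j.2) = 1 := by
    have : PiR k H delta S 1 = ∑ j ∈ s, S j.1 * j.2 := by
      rw [PiR_def, hs, map_sum, map_sum]
      exact Finset.sum_congr rfl fun j _ => by
        rw [LinearMap.rTensor_tmul, LinearMap.mul'_apply]
    rw [← this, PiR_one hH hs]
  rw [h1]
  have : ∀ j ∈ s, S (j.1 * PiL k H delta S x) * j.2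
      = S (PiL k H delta S x) * (S j.1 * j.2) := fun j _ => by
    rw [S_antimul hH hs, mul_assoc]
  rw [Finset.sum_congr rfl this, ← Finset.mul_sum, h2, mul_one]

lemma S_PiR (x : H) : S (PiR k H delta S x) = PiL k H delta S (PiR k H delta S x) := by
  have h1 : PiL k H delta S (PiR k H delta S x)
      = ∑ j ∈ s, j.1 * S (PiR k H delta S x * j.2) := by
    rw [PiL_def, delta_PiR' hH hs, map_sum, map_sum]
    exact Finset.sum_congr rfl fun j _ => by
      rw [LinearMap.lTensor_tmul, LinearMap.mul'_apply]
  have h2 : (∑ j ∈ s, j.1 * S j.2) = 1 := by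
    have : PiL k H delta S 1 = ∑ j ∈ s, j.1 * S j.2 := by
      rw [PiL_def, hs, map_sum, map_sum]
      exact Finset.sum_congr rfl fun j _ => by
        rw [LinearMap.lTensor_tmul, LinearMap.mul'_apply]
    rw [← this, PiL_one hH hs]
  rw [h1]
  have : ∀ j ∈ s, j.1 * S (PiR k H delta S x * j.2)
      = (j.1 * S j.2) * S (PiR k H delta S x) := fun j _ => by
    rw [S_antimul hH hs, mul_assoc]
  rw [Finset.sum_congr rfl this, ← Finset.sum_mul, h2, one_mul]

lemma sum_SS : ∑ p ∈ s, S p.2 ⊗ₜ[k] S p.1 = delta 1 := by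
  -- the collapse identity (as in `sum_PiR_tmul`)
  have h := congrArg
    (LinearMap.rTensor H ((TensorProduct.rid k H).toLinearMap ∘ₗ eps.lTensor H)) (D1b hH hs)
  simp only [map_sum, LinearMap.rTensor_tmul, LinearMap.comp_apply, LinearEquiv.coe_coe] at h
  have hL : ∀ p ∈ s, (TensorProduct.rid k H) ((eps.lTensor H) (delta p.1)) ⊗ₜ[k] p.2
      = p.1 ⊗ₜ[k] p.2 := fun p _ => by rw [hH.counit_right]
  rw [Finset.sum_congr rfl hL] at h
  -- chain of substitutions
  have e1 : ∑ p ∈ s, S p.2 ⊗ₜ[k] S p.1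
      = (TensorProduct.map S S) ((TensorProduct.comm k H H) (delta 1)) := by
    rw [hs]
    simp [map_sum]
  have e2 : (TensorProduct.map S S) ((TensorProduct.comm k H H) (delta 1))
      = (TensorProduct.map S (PiL k H delta S)) ((TensorProduct.comm k H H) (delta 1)) := by
    conv_lhs => rw [← sum_PiR_tmul hH hs]
    conv_rhs => rw [← sum_PiR_tmul hH hs]
    simp only [map_sum, TensorProduct.comm_tmul, TensorProduct.map_tmul]
    exact Finset.sum_congr rfl fun p _ => by rw [S_PiR hH hs]
  have e3 : (TensorProduct.map S (PiL k H delta S)) ((TensorProduct.comm k H H) (delta 1))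
      = (TensorProduct.map (PiR k H delta S) (PiL k H delta S))
          ((TensorProduct.comm k H H) (delta 1)) := by
    conv_lhs => rw [← sum_tmul_PiL hH hs]
    conv_rhs => rw [← sum_tmul_PiL hH hs]
    simp only [map_sum, TensorProduct.comm_tmul, TensorProduct.map_tmul]
    exact Finset.sum_congr rfl fun p _ => by rw [S_PiL hH hs]
  have e4 : (TensorProduct.map (PiR k H delta S) (PiL k H delta S))
      ((TensorProduct.comm k H H) (delta 1))
      = ∑ p ∈ s, ∑ q ∈ s, eps (q.1 * p.2) • (p.1 ⊗ₜ[k] q.2) := by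
    rw [hs]
    simp only [map_sum, TensorProduct.comm_tmul, TensorProduct.map_tmul]
    calc ∑ p ∈ s, PiR k H delta S p.2 ⊗ₜ[k] PiL k H delta S p.1
        = ∑ p ∈ s, ∑ a ∈ s, ∑ b ∈ s,
            (eps (b.1 * p.1) * eps (p.2 * a.2)) • (a.1 ⊗ₜ[k] b.2) := by
          refine Finset.sum_congr rfl fun p _ => ?_
          rw [PiR_apply hH hs, PiL_apply hH hs, sum_tmul]
          refine Finset.sum_congr rfl fun a _ => ?_
          rw [tmul_sum]
          refine Finset.sum_congr rfl fun b _ => ?_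
          rw [tmul_smul, ← smul_tmul', smul_smul]
      _ = ∑ a ∈ s, ∑ b ∈ s,
            (∑ p ∈ s, eps (b.1 * p.1) * eps (p.2 * a.2)) • (a.1 ⊗ₜ[k] b.2) := by
          rw [Finset.sum_comm]
          refine Finset.sum_congr rfl fun a _ => ?_
          rw [Finset.sum_comm]
          refine Finset.sum_congr rfl fun b _ => ?_
          rw [Finset.sum_smul]
      _ = ∑ a ∈ s, ∑ b ∈ s, eps (b.1 * a.2) • (a.1 ⊗ₜ[k] b.2) := by
          refine Finset.sum_congr rfl fun a _ => Finset.sum_congr rfl fun b _ => ?_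
          rw [eps_expand₁ hH hs]
  rw [e1, e2, e3, e4, hs, h]
  refine Finset.sum_congr rfl fun p _ => Finset.sum_congr rfl fun q _ => ?_
  simp [smul_tmul']

lemma antihomG (A B : H ⊗[k] H) :
    (TensorProduct.map S S) ((TensorProduct.comm k H H) (A * B))
      = (TensorProduct.map S S) ((TensorProduct.comm k H H) B)
        * (TensorProduct.map S S) ((TensorProduct.comm k H H) A) := by
  obtain ⟨tA, hA⟩ := TensorProduct.exists_finset A
  obtain ⟨tB, hB⟩ := TensorProduct.exists_finset B
  rw [hA, hB, Finset.sum_mul_sum]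
  simp only [map_sum, Algebra.TensorProduct.tmul_mul_tmul, TensorProduct.comm_tmul,
    TensorProduct.map_tmul, Finset.sum_mul_sum]
  rw [Finset.sum_comm]
  refine Finset.sum_congr rfl fun a _ => Finset.sum_congr rfl fun b _ => ?_
  rw [S_antimul hH hs, S_antimul hH hs]

lemma G_delta_one : (TensorProduct.map S S) ((TensorProduct.comm k H H) (delta 1))
    = delta 1 := by
  calc (TensorProduct.map S S) ((TensorProduct.comm k H H) (delta 1))
      = ∑ p ∈ s, S p.2 ⊗ₜ[k] S p.1 := by
        rw [hs]
        simp only [map_sum, TensorProduct.comm_tmul, TensorProduct.map_tmul]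
    _ = delta 1 := sum_SS hH hs

lemma G_mul_delta_one (w : H) :
    (TensorProduct.map S S) ((TensorProduct.comm k H H) (delta w)) * delta 1
      = (TensorProduct.map S S) ((TensorProduct.comm k H H) (delta w)) := by
  conv_lhs => rw [← G_delta_one hH hs]
  rw [← antihomG hH hs, ← hH.delta_mul, one_mul]


lemma GDelta (v : H) {t : Finset (H × H)} (ht : delta v = ∑ r ∈ t, r.1 ⊗ₜ[k] r.2) :
    ∑ r ∈ t, ((TensorProduct.map S S) ((TensorProduct.comm k H H) (delta r.1))) * delta r.2
      = delta (PiR k H delta S v) := by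
  have hrep : ∀ z : H × H, ∃ u : Finset (H × H), delta z.2 = ∑ r ∈ u, r.1 ⊗ₜ[k] r.2 :=
    fun z => TensorProduct.exists_finset _
  choose U hU using hrep
  have E : ∑ r ∈ t, delta r.1 ⊗ₜ[k] r.2
      = ∑ r ∈ t, (TensorProduct.assoc k H H H).symm (r.1 ⊗ₜ[k] delta r.2) := by
    have := congrArg (TensorProduct.assoc k H H H).symm.toLinearMap (coassoc_rep hH hs ht)
    simp only [map_sum, LinearEquiv.coe_coe] at this
    simpa using this.symm
  calc ∑ r ∈ t, ((TensorProduct.map S S) ((TensorProduct.comm k H H) (delta r.1))) * delta r.2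
      = ∑ r ∈ t, (LinearMap.mul' k (H ⊗[k] H) ∘ₗ
          (TensorProduct.map
            ((TensorProduct.map S S) ∘ₗ (TensorProduct.comm k H H).toLinearMap) delta))
          (delta r.1 ⊗ₜ[k] r.2) := by
        refine Finset.sum_congr rfl fun r _ => ?_
        simp only [LinearMap.comp_apply, TensorProduct.map_tmul, LinearMap.mul'_apply,
          LinearEquiv.coe_coe]
    _ = ∑ r ∈ t, ∑ u ∈ U r, ((S u.1 ⊗ₜ[k] S r.1) * delta u.2) := by
        rw [← map_sum, E, map_sum]
        refine Finset.sum_congr rfl fun r _ => ?_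
        rw [hU r, tmul_sum]
        simp only [map_sum]
        refine Finset.sum_congr rfl fun u _ => ?_
        rw [assoc_symm_tmul]
        simp only [LinearMap.comp_apply, TensorProduct.map_tmul, LinearMap.mul'_apply,
          LinearEquiv.coe_coe, TensorProduct.comm_tmul]
    _ = ∑ r ∈ t, ∑ u ∈ U r,
          ((TensorProduct.map (LinearMap.mul' k H ∘ₗ S.rTensor H)
            (LinearMap.mulLeft k (S r.1)))
            ((TensorProduct.assoc k H H H).symm (u.1 ⊗ₜ[k] delta u.2))) := by
        refine Finset.sum_congr rfl fun r _ => Finset.sum_congr rfl fun u _ => ?_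
        rw [hU u, tmul_sum, Finset.mul_sum]
        simp only [map_sum]
        refine Finset.sum_congr rfl fun w _ => ?_
        rw [assoc_symm_tmul, Algebra.TensorProduct.tmul_mul_tmul]
        simp only [TensorProduct.map_tmul, LinearMap.comp_apply, LinearMap.rTensor_tmul,
          LinearMap.mul'_apply, LinearMap.mulLeft_apply]
    _ = ∑ r ∈ t, ∑ u ∈ U r, PiR k H delta S u.1 ⊗ₜ[k] (S r.1 * u.2) := by
        refine Finset.sum_congr rfl fun r _ => ?_
        have E2 : ∑ u ∈ U r, u.1 ⊗ₜ[k] delta u.2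
            = ∑ u ∈ U r, (TensorProduct.assoc k H H H) (delta u.1 ⊗ₜ[k] u.2) :=
          coassoc_rep hH hs (hU r)
        rw [← map_sum, ← map_sum, E2, map_sum, map_sum]
        refine Finset.sum_congr rfl fun u _ => ?_
        rw [LinearEquiv.symm_apply_apply]
        simp only [TensorProduct.map_tmul, LinearMap.comp_apply, LinearMap.mulLeft_apply]
        rw [← PiR_def]
    _ = ∑ r ∈ t, ∑ j ∈ s, j.1 ⊗ₜ[k] (S r.1 * (r.2 * j.2)) := by
        refine Finset.sum_congr rfl fun r _ => ?_
        have : ∑ u ∈ U r, PiR k H delta S u.1 ⊗ₜ[k] (S r.1 * u.2)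
            = (LinearMap.lTensor H (LinearMap.mulLeft k (S r.1)))
                ((LinearMap.rTensor H (PiR k H delta S)) (delta r.2)) := by
          rw [hU r, map_sum, map_sum]
          refine Finset.sum_congr rfl fun u _ => ?_
          simp only [LinearMap.rTensor_tmul, LinearMap.lTensor_tmul, LinearMap.mulLeft_apply]
        rw [this, rTensor_PiR_delta hH hs, map_sum]
        refine Finset.sum_congr rfl fun j _ => ?_
        simp only [LinearMap.lTensor_tmul, LinearMap.mulLeft_apply]
    _ = delta (PiR k H delta S v) := by
        rw [Finset.sum_comm, delta_PiR' hH hs]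
        refine Finset.sum_congr rfl fun j _ => ?_
        rw [← tmul_sum]
        congr 1
        have : ∀ r ∈ t, S r.1 * (r.2 * j.2) = (S r.1 * r.2) * j.2 := fun r _ => by
          rw [mul_assoc]
        rw [Finset.sum_congr rfl this, ← Finset.sum_mul]
        congr 1
        rw [PiR_def, ht, map_sum, map_sum]
        exact Finset.sum_congr rfl fun r _ => by
          rw [LinearMap.rTensor_tmul, LinearMap.mul'_apply]

lemma S_anticomul (x : H) :
    delta (S x) = (TensorProduct.map S S) ((TensorProduct.comm k H H) (delta x)) := by
  obtain ⟨P, hP⟩ := TensorProduct.exists_finset (delta x)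
  have hrep : ∀ z : H × H, ∃ u : Finset (H × H), delta z.1 = ∑ r ∈ u, r.1 ⊗ₜ[k] r.2 :=
    fun z => TensorProduct.exists_finset _
  choose T hT using hrep
  have hrep2 : ∀ z : H × H, ∃ u : Finset (H × H), delta z.2 = ∑ r ∈ u, r.1 ⊗ₜ[k] r.2 :=
    fun z => TensorProduct.exists_finset _
  choose U hU using hrep2
  have E : ∑ p ∈ P, delta p.1 ⊗ₜ[k] p.2
      = ∑ p ∈ P, (TensorProduct.assoc k H H H).symm (p.1 ⊗ₜ[k] delta p.2) := by
    have := congrArg (TensorProduct.assoc k H H H).symm.toLinearMap (coassoc_rep hH hs hP)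
    simp only [map_sum, LinearEquiv.coe_coe] at this
    simpa using this.symm
  -- notation shortcut
  set G' : H →ₗ[k] H ⊗[k] H :=
    (TensorProduct.map S S) ∘ₗ (TensorProduct.comm k H H).toLinearMap ∘ₗ delta with hG'
  have hG'app : ∀ w, G' w = (TensorProduct.map S S) ((TensorProduct.comm k H H) (delta w)) :=
    fun w => rfl
  calc delta (S x)
      = ∑ p ∈ P, delta (PiR k H delta S p.1) * delta (S p.2) := by
        rw [← sum_PiR_S hH hs hP, map_sum]
        exact Finset.sum_congr rfl fun p _ => hH.delta_mul _ _
    _ = ∑ p ∈ P, ∑ r ∈ T p, G' r.1 * (delta r.2 * delta (S p.2)) := by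
        refine Finset.sum_congr rfl fun p _ => ?_
        rw [← GDelta hH hs p.1 (hT p), Finset.sum_mul]
        exact Finset.sum_congr rfl fun r _ => by rw [mul_assoc, hG'app]
    _ = ∑ p ∈ P, ∑ r ∈ T p, G' r.1 * delta (r.2 * S p.2) := by
        refine Finset.sum_congr rfl fun p _ => Finset.sum_congr rfl fun r _ => ?_
        rw [hH.delta_mul]
    _ = ∑ p ∈ P, G' p.1 * delta (PiL k H delta S p.2) := by
        have key := congrArg (LinearMap.mul' k (H ⊗[k] H) ∘ₗ
          (TensorProduct.map G' (delta ∘ₗ LinearMap.mul' k H ∘ₗ S.lTensor H))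
          ∘ₗ (TensorProduct.assoc k H H H).toLinearMap) E
        simp only [map_sum, LinearMap.comp_apply, LinearEquiv.coe_coe,
          LinearEquiv.apply_symm_apply] at key
        calc ∑ p ∈ P, ∑ r ∈ T p, G' r.1 * delta (r.2 * S p.2)
            = ∑ p ∈ P, (LinearMap.mul' k (H ⊗[k] H))
                ((TensorProduct.map G' (delta ∘ₗ LinearMap.mul' k H ∘ₗ S.lTensor H))
                  ((TensorProduct.assoc k H H H) (delta p.1 ⊗ₜ[k] p.2))) := by
              refine Finset.sum_congr rfl fun p _ => ?_
              rw [hT p, sum_tmul]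
              simp only [map_sum]
              refine Finset.sum_congr rfl fun r _ => ?_
              simp only [LinearMap.comp_apply, LinearEquiv.coe_coe, assoc_tmul,
                TensorProduct.map_tmul, LinearMap.mul'_apply, LinearMap.lTensor_tmul]
            _ = ∑ p ∈ P, G' p.1 * delta (PiL k H delta S p.2) := by
              rw [key]
              refine Finset.sum_congr rfl fun p _ => ?_
              simp only [TensorProduct.map_tmul, LinearMap.comp_apply,
                LinearMap.mul'_apply]
              rw [← PiL_def]
    _ = ∑ j ∈ s, ∑ p ∈ P, ∑ r ∈ T p,
          ((S r.2 * PiL k H delta S p.2) * j.1) ⊗ₜ[k] (S r.1 * j.2) := by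
        rw [Finset.sum_comm]
        refine Finset.sum_congr rfl fun p _ => ?_
        rw [delta_PiL hH hs, Finset.mul_sum]
        refine Finset.sum_congr rfl fun j _ => ?_
        rw [hG'app, hT p, map_sum, map_sum, Finset.sum_mul]
        refine Finset.sum_congr rfl fun r _ => ?_
        rw [TensorProduct.comm_tmul, TensorProduct.map_tmul,
          Algebra.TensorProduct.tmul_mul_tmul]
        rw [mul_assoc]
    _ = ∑ j ∈ s, ∑ p ∈ P, (S p.2 * j.1) ⊗ₜ[k] (S p.1 * j.2) := by
        refine Finset.sum_congr rfl fun j _ => ?_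
        have key := congrArg ((TensorProduct.map
            (LinearMap.mulRight k j.1 ∘ₗ LinearMap.mul' k H
              ∘ₗ (TensorProduct.map S (PiL k H delta S)))
            (LinearMap.mulRight k j.2 ∘ₗ S))
          ∘ₗ (TensorProduct.comm k H (H ⊗[k] H)).toLinearMap
          ∘ₗ (TensorProduct.assoc k H H H).toLinearMap) E
        simp only [map_sum, LinearMap.comp_apply, LinearEquiv.coe_coe,
          LinearEquiv.apply_symm_apply] at key
        calc ∑ p ∈ P, ∑ r ∈ T p, ((S r.2 * PiL k H delta S p.2) * j.1) ⊗ₜ[k] (S r.1 * j.2)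
            = ∑ p ∈ P, ((TensorProduct.map
                (LinearMap.mulRight k j.1 ∘ₗ LinearMap.mul' k H
                  ∘ₗ (TensorProduct.map S (PiL k H delta S)))
                (LinearMap.mulRight k j.2 ∘ₗ S))
                ((TensorProduct.comm k H (H ⊗[k] H))
                  ((TensorProduct.assoc k H H H) (delta p.1 ⊗ₜ[k] p.2)))) := by
              refine Finset.sum_congr rfl fun p _ => ?_
              rw [hT p, sum_tmul]
              simp only [map_sum]
              refine Finset.sum_congr rfl fun r _ => ?_
              simp only [LinearMap.comp_apply, LinearEquiv.coe_coe, assoc_tmul,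
                TensorProduct.comm_tmul, TensorProduct.map_tmul, LinearMap.mul'_apply,
                LinearMap.mulRight_apply]
            _ = ∑ p ∈ P, (S p.2 * j.1) ⊗ₜ[k] (S p.1 * j.2) := by
              rw [key]
              refine Finset.sum_congr rfl fun p _ => ?_
              rw [TensorProduct.comm_tmul, TensorProduct.map_tmul]
              simp only [LinearMap.comp_apply, LinearMap.mulRight_apply]
              rw [muSPiL hH hs]
    _ = (TensorProduct.map S S) ((TensorProduct.comm k H H) (delta x)) := by
        rw [Finset.sum_comm]
        have fold : ∑ p ∈ P, ∑ j ∈ s, (S p.2 * j.1) ⊗ₜ[k] (S p.1 * j.2)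
            = ((TensorProduct.map S S) ((TensorProduct.comm k H H) (delta x))) * delta 1 := by
          rw [hP, hs]
          simp only [map_sum, TensorProduct.comm_tmul, TensorProduct.map_tmul]
          rw [Finset.sum_mul_sum]
          exact Finset.sum_congr rfl fun p _ => Finset.sum_congr rfl fun j _ => by
            rw [Algebra.TensorProduct.tmul_mul_tmul]
        rw [fold, G_mul_delta_one hH hs]

lemma PiL_left_mul (u z : H) :
    PiL k H delta S (PiL k H delta S u * z) = PiL k H delta S u * PiL k H delta S z := by
  obtain ⟨W, hW⟩ := TensorProduct.exists_finset (delta z)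
  have h1 : delta (PiL k H delta S u * z) = (PiL k H delta S u ⊗ₜ[k] (1:H)) * delta z := by
    rw [hH.delta_mul, delta_PiL hH hs]
    have : ∑ p ∈ s, (PiL k H delta S u * p.1) ⊗ₜ[k] p.2
        = (PiL k H delta S u ⊗ₜ[k] (1:H)) * delta 1 := by
      rw [hs, Finset.mul_sum]
      exact Finset.sum_congr rfl fun p _ => by
        rw [Algebra.TensorProduct.tmul_mul_tmul, one_mul]
    rw [this, mul_assoc, ← hH.delta_mul, one_mul]
  rw [PiL_def, h1, hW, Finset.mul_sum, map_sum, map_sum]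
  have : ∀ w ∈ W, LinearMap.mul' k H ((S.lTensor H)
      ((PiL k H delta S u ⊗ₜ[k] (1:H)) * (w.1 ⊗ₜ[k] w.2)))
      = PiL k H delta S u * (w.1 * S w.2) := fun w _ => by
    rw [Algebra.TensorProduct.tmul_mul_tmul, one_mul, LinearMap.lTensor_tmul,
      LinearMap.mul'_apply, mul_assoc]
  rw [Finset.sum_congr rfl this, ← Finset.mul_sum]
  congr 1
  rw [PiL_def, hW, map_sum, map_sum]
  exact Finset.sum_congr rfl fun w _ => by
    rw [LinearMap.lTensor_tmul, LinearMap.mul'_apply]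

section ComodAlg

variable {B : Type} [Ring B] [Algebra k B]
variable {rhoB : B →ₗ[k] B ⊗[k] H} {h : H →ₗ[k] B}
variable (hB : IsComoduleAlgebra k H delta eps rhoB)
    (h_one : h 1 = 1)
    (h_mul : ∀ x y, h (x * y) = h x * h y)
    (h_comod : rhoB ∘ₗ h = h.rTensor H ∘ₗ delta)
include hB h_one h_comod

omit hH hs in
lemma rhoB_one : rhoB 1 = (h.rTensor H) (delta 1) := by
  have := LinearMap.congr_fun h_comod 1
  simpa [h_one] using this

omit hH hs in
lemma coassoc_repB {b : B} {t : Finset (B × H)}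
    (ht : rhoB b = ∑ c ∈ t, c.1 ⊗ₜ[k] c.2) :
    ∑ c ∈ t, c.1 ⊗ₜ[k] delta c.2
      = ∑ c ∈ t, (TensorProduct.assoc k B H H) (rhoB c.1 ⊗ₜ[k] c.2) := by
  have h0 := LinearMap.congr_fun hB.coassoc b
  simp only [LinearMap.comp_apply] at h0
  rw [ht] at h0
  simp only [map_sum, LinearMap.rTensor_tmul, LinearMap.lTensor_tmul] at h0
  have := congrArg (TensorProduct.assoc k B H H).toLinearMap h0
  simp only [map_sum, LinearEquiv.coe_coe, LinearEquiv.apply_symm_apply] at this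
  exact this.symm

lemma one_mem_coinv : rhoB 1 = (LinearMap.lTensor B (PiL k H delta S)) (rhoB 1) := by
  rw [rhoB_one hB h_one h_comod]
  calc (h.rTensor H) (delta 1)
      = ∑ p ∈ s, h p.1 ⊗ₜ[k] PiL k H delta S p.2 := by
        rw [← sum_tmul_PiL hH hs, map_sum]
        exact Finset.sum_congr rfl fun p _ => by rw [LinearMap.rTensor_tmul]
    _ = (LinearMap.lTensor B (PiL k H delta S)) ((h.rTensor H) (delta 1)) := by
        rw [hs, map_sum, map_sum]
        exact Finset.sum_congr rfl fun p _ => by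
          rw [LinearMap.rTensor_tmul, LinearMap.lTensor_tmul]

lemma q_inv (b : B) :
    LinearMap.mul' k B ((LinearMap.lTensor B (h ∘ₗ PiR k H delta S)) (rhoB b)) = b := by
  obtain ⟨t, ht⟩ := TensorProduct.exists_finset (rhoB b)
  have hb1 : rhoB b = ∑ c ∈ t, ∑ j ∈ s, (c.1 * h j.1) ⊗ₜ[k] (c.2 * j.2) := by
    conv_lhs => rw [← mul_one b, hB.mul_compat]
    rw [rhoB_one hB h_one h_comod, ht, hs, map_sum, Finset.sum_mul_sum]
    refine Finset.sum_congr rfl fun c _ => Finset.sum_congr rfl fun j _ => ?_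
    rw [LinearMap.rTensor_tmul, Algebra.TensorProduct.tmul_mul_tmul]
  have hcount := hB.counit b
  rw [hb1] at hcount
  simp only [map_sum, LinearMap.lTensor_tmul, TensorProduct.rid_tmul] at hcount
  rw [ht, map_sum, map_sum, ← hcount]
  refine Finset.sum_congr rfl fun c _ => ?_
  rw [LinearMap.lTensor_tmul, LinearMap.mul'_apply, LinearMap.comp_apply,
    PiR_apply hH hs, map_sum, Finset.mul_sum]
  refine Finset.sum_congr rfl fun j _ => ?_
  rw [map_smul, mul_smul_comm]

lemma q_fix {b : B} (hb : rhoB b = (LinearMap.lTensor B (PiL k H delta S)) (rhoB b)) :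
    LinearMap.mul' k B ((LinearMap.lTensor B (h ∘ₗ S)) (rhoB b)) = b := by
  obtain ⟨t, ht⟩ := TensorProduct.exists_finset (rhoB b)
  conv_lhs => rw [hb]
  rw [ht, map_sum, map_sum, map_sum]
  calc ∑ c ∈ t, LinearMap.mul' k B ((LinearMap.lTensor B (h ∘ₗ S))
        ((LinearMap.lTensor B (PiL k H delta S)) (c.1 ⊗ₜ[k] c.2)))
      = ∑ c ∈ t, LinearMap.mul' k B ((LinearMap.lTensor B (h ∘ₗ PiR k H delta S))
          ((LinearMap.lTensor B (PiL k H delta S)) (c.1 ⊗ₜ[k] c.2))) := by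
        refine Finset.sum_congr rfl fun c _ => ?_
        simp only [LinearMap.lTensor_tmul, LinearMap.comp_apply]
        rw [S_PiL hH hs]
    _ = b := by
        have : (∑ c ∈ t, (LinearMap.lTensor B (PiL k H delta S)) (c.1 ⊗ₜ[k] c.2))
            = rhoB b := by
          rw [← map_sum, ← ht, ← hb]
        calc ∑ c ∈ t, LinearMap.mul' k B ((LinearMap.lTensor B (h ∘ₗ PiR k H delta S))
              ((LinearMap.lTensor B (PiL k H delta S)) (c.1 ⊗ₜ[k] c.2)))
            = LinearMap.mul' k B ((LinearMap.lTensor B (h ∘ₗ PiR k H delta S))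
                (rhoB b)) := by
              rw [← this, map_sum, map_sum]
          _ = b := q_inv hH hs hB h_one h_comod b

lemma q_coinv (b : B) :
    rhoB (LinearMap.mul' k B ((LinearMap.lTensor B (h ∘ₗ S)) (rhoB b)))
      = (LinearMap.lTensor B (PiL k H delta S))
          (rhoB (LinearMap.mul' k B ((LinearMap.lTensor B (h ∘ₗ S)) (rhoB b)))) := by
  obtain ⟨t, ht⟩ := TensorProduct.exists_finset (rhoB b)
  have hrep : ∀ c : B × H, ∃ u : Finset (B × H), rhoB c.1 = ∑ e ∈ u, e.1 ⊗ₜ[k] e.2 :=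
    fun c => TensorProduct.exists_finset _
  choose E hE using hrep
  -- the key formula (★)
  have star : rhoB (LinearMap.mul' k B ((LinearMap.lTensor B (h ∘ₗ S)) (rhoB b)))
      = ∑ c ∈ t, ((LinearMap.lTensor B (PiL k H delta S)) (rhoB c.1))
          * (h (S c.2) ⊗ₜ[k] (1:H)) := by
    have hco := coassoc_repB hB h_one h_comod ht
    -- Ω map
    set inner : B ⊗[k] H →ₗ[k] B ⊗[k] H :=
      LinearMap.mul' k (B ⊗[k] H) ∘ₗ
        (TensorProduct.map rhoB ((TensorProduct.mk k B H (1:B)) ∘ₗ S)) with hinner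
    set f₂ : H →ₗ[k] B ⊗[k] H :=
      ((TensorProduct.mk k B H).flip ((1:H))) ∘ₗ h ∘ₗ S with hf₂
    set Omg : B ⊗[k] (H ⊗[k] H) →ₗ[k] B ⊗[k] H :=
      LinearMap.mul' k (B ⊗[k] H) ∘ₗ (TensorProduct.map inner f₂)
        ∘ₗ (TensorProduct.assoc k B H H).symm.toLinearMap with hOmg
    have gen : ∀ (β : B) (T : H ⊗[k] H),
        rhoB β * ((h.rTensor H) ((TensorProduct.map S S) ((TensorProduct.comm k H H) T)))
          = Omg (β ⊗ₜ[k] T) := by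
      intro β T
      induction T using TensorProduct.induction_on with
      | zero => simp
      | tmul u v =>
        simp only [hOmg, hinner, hf₂, LinearMap.comp_apply, LinearEquiv.coe_coe,
          TensorProduct.comm_tmul, TensorProduct.map_tmul, assoc_symm_tmul,
          LinearMap.mul'_apply, TensorProduct.mk_apply, LinearMap.flip_apply,
          LinearMap.rTensor_tmul]
        rw [mul_assoc, Algebra.TensorProduct.tmul_mul_tmul, one_mul, mul_one]
      | add X Y hX hY =>
        simp only [map_add, tmul_add, mul_add] at *
        rw [hX, hY]
    have lhs_eq : rhoB (LinearMap.mul' k B ((LinearMap.lTensor B (h ∘ₗ S)) (rhoB b)))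
        = ∑ c ∈ t, Omg (c.1 ⊗ₜ[k] delta c.2) := by
      rw [ht, map_sum, map_sum, map_sum]
      refine Finset.sum_congr rfl fun c _ => ?_
      rw [LinearMap.lTensor_tmul, LinearMap.mul'_apply, LinearMap.comp_apply,
        hB.mul_compat]
      have hrh : rhoB (h (S c.2)) = (h.rTensor H) (delta (S c.2)) :=
        LinearMap.congr_fun h_comod (S c.2)
      rw [hrh, S_anticomul hH hs]
      exact gen c.1 (delta c.2)
    rw [lhs_eq, ← map_sum, hco, map_sum]
    refine Finset.sum_congr rfl fun c _ => ?_
    have hfold : ∀ e : B × H, Omg ((TensorProduct.assoc k B H H) ((e.1 ⊗ₜ[k] e.2) ⊗ₜ[k] c.2))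
        = (rhoB e.1 * ((1:B) ⊗ₜ[k] S e.2)) * (h (S c.2) ⊗ₜ[k] (1:H)) := fun e => by
      simp only [hOmg, hinner, hf₂, assoc_tmul, LinearMap.comp_apply, LinearEquiv.coe_coe,
        assoc_symm_tmul, TensorProduct.map_tmul, LinearMap.mul'_apply,
        TensorProduct.mk_apply, LinearMap.flip_apply]
    have hco2 := coassoc_repB hB h_one h_comod (hE c)
    have hco2' : ∑ e ∈ E c, rhoB e.1 ⊗ₜ[k] e.2
        = ∑ e ∈ E c, (TensorProduct.assoc k B H H).symm (e.1 ⊗ₜ[k] delta e.2) := by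
      have := congrArg (TensorProduct.assoc k B H H).symm.toLinearMap hco2
      simp only [map_sum, LinearEquiv.coe_coe, LinearEquiv.symm_apply_apply] at this
      exact this.symm
    calc Omg ((TensorProduct.assoc k B H H) (rhoB c.1 ⊗ₜ[k] c.2))
        = ∑ e ∈ E c, Omg ((TensorProduct.assoc k B H H) ((e.1 ⊗ₜ[k] e.2) ⊗ₜ[k] c.2)) := by
          rw [hE c, sum_tmul]
          simp only [map_sum]
      _ = (∑ e ∈ E c, rhoB e.1 * ((1:B) ⊗ₜ[k] S e.2)) * (h (S c.2) ⊗ₜ[k] (1:H)) := by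
          rw [Finset.sum_congr rfl fun e _ => hfold e, ← Finset.sum_mul]
      _ = ((LinearMap.lTensor B (PiL k H delta S)) (rhoB c.1)) * (h (S c.2) ⊗ₜ[k] (1:H)) := by
          congr 1
          calc ∑ e ∈ E c, rhoB e.1 * ((1:B) ⊗ₜ[k] S e.2)
              = ∑ e ∈ E c, (LinearMap.mul' k (B ⊗[k] H) ∘ₗ
                  (TensorProduct.map LinearMap.id ((TensorProduct.mk k B H (1:B)) ∘ₗ S)))
                  (rhoB e.1 ⊗ₜ[k] e.2) := by
                refine Finset.sum_congr rfl fun e _ => ?_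
                simp only [LinearMap.comp_apply, TensorProduct.map_tmul,
                  LinearMap.mul'_apply, TensorProduct.mk_apply, LinearMap.id_apply]
            _ = ∑ e ∈ E c, (LinearMap.mul' k (B ⊗[k] H) ∘ₗ
                  (TensorProduct.map LinearMap.id ((TensorProduct.mk k B H (1:B)) ∘ₗ S)))
                  ((TensorProduct.assoc k B H H).symm (e.1 ⊗ₜ[k] delta e.2)) := by
                rw [← map_sum, hco2', map_sum]
            _ = ∑ e ∈ E c, e.1 ⊗ₜ[k] PiL k H delta S e.2 := by
                refine Finset.sum_congr rfl fun e _ => ?_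
                obtain ⟨g, hg⟩ := TensorProduct.exists_finset (delta e.2)
                rw [hg, tmul_sum]
                simp only [map_sum]
                rw [PiL_def, hg, map_sum, map_sum, tmul_sum]
                refine Finset.sum_congr rfl fun w _ => ?_
                simp only [LinearMap.comp_apply, LinearEquiv.coe_coe, assoc_symm_tmul,
                  TensorProduct.map_tmul, LinearMap.mul'_apply, TensorProduct.mk_apply,
                  LinearMap.id_apply, LinearMap.lTensor_tmul,
                  Algebra.TensorProduct.tmul_mul_tmul, mul_one, one_mul]
            _ = (LinearMap.lTensor B (PiL k H delta S)) (rhoB c.1) := by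
                conv_rhs => rw [hE c]
                rw [map_sum]
                exact Finset.sum_congr rfl fun e _ => by rw [LinearMap.lTensor_tmul]
  rw [star, map_sum]
  refine Finset.sum_congr rfl fun c _ => ?_
  obtain ⟨u, hu⟩ := TensorProduct.exists_finset (rhoB c.1)
  rw [hu]
  simp only [map_sum, Finset.sum_mul]
  refine Finset.sum_congr rfl fun e _ => ?_
  simp only [LinearMap.lTensor_tmul, Algebra.TensorProduct.tmul_mul_tmul, mul_one]
  rw [PiL_PiL hH hs]

lemma mul_mem_coinv {a b : B}
    (ha : rhoB a = (LinearMap.lTensor B (PiL k H delta S)) (rhoB a))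
    (hb : rhoB b = (LinearMap.lTensor B (PiL k H delta S)) (rhoB b)) :
    rhoB (a * b) = (LinearMap.lTensor B (PiL k H delta S)) (rhoB (a * b)) := by
  obtain ⟨ta, hta⟩ := TensorProduct.exists_finset (rhoB a)
  obtain ⟨tb, htb⟩ := TensorProduct.exists_finset (rhoB b)
  have hab : rhoB (a * b) = ∑ e ∈ ta, ∑ f ∈ tb,
      (e.1 * f.1) ⊗ₜ[k] (PiL k H delta S e.2 * PiL k H delta S f.2) := by
    rw [hB.mul_compat, ha, hb, hta, htb, map_sum, map_sum, Finset.sum_mul_sum]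
    simp only [LinearMap.lTensor_tmul, Algebra.TensorProduct.tmul_mul_tmul]
  rw [hab]
  simp only [map_sum, LinearMap.lTensor_tmul]
  refine Finset.sum_congr rfl fun e _ => Finset.sum_congr rfl fun f _ => ?_
  rw [PiL_left_mul hH hs, PiL_PiL hH hs]

end ComodAlg
end Dev

variable (B : Type) [Ring B] [Algebra k B]
variable (rhoB : B →ₗ[k] B ⊗[k] H) (h : H →ₗ[k] B)

/-- For a weak Hopf algebra `H` and a right `H`-comodule algebra `B` with a total
integral `h : H → B` which is an algebra map and a comodule map, the endomorphism
`q_B(b) = b₍₀₎ h(S(b₍₁₎))` is idempotent with image the coinvariants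
`B^{coH} = {b : ρ_B(b) = b₍₀₎ ⊗ Π_L(b₍₁₎)}`; moreover `B^{coH}` is a subalgebra of `B`
containing `1_B`. -/
theorem weak_qB_idempotent_range
    (hH : IsWeakHopfAlgebra k H delta eps S)
    (hB : IsComoduleAlgebra k H delta eps rhoB)
    (h_one : h 1 = 1)
    (h_mul : ∀ x y, h (x * y) = h x * h y)
    (h_comod : rhoB ∘ₗ h = h.rTensor H ∘ₗ delta) :
    (LinearMap.mul' k B ∘ₗ (h ∘ₗ S).lTensor B ∘ₗ rhoB)
        ∘ₗ (LinearMap.mul' k B ∘ₗ (h ∘ₗ S).lTensor B ∘ₗ rhoB)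
      = LinearMap.mul' k B ∘ₗ (h ∘ₗ S).lTensor B ∘ₗ rhoB ∧
    LinearMap.range (LinearMap.mul' k B ∘ₗ (h ∘ₗ S).lTensor B ∘ₗ rhoB)
      = LinearMap.eqLocus rhoB ((PiL k H delta S).lTensor B ∘ₗ rhoB) ∧
    (1 : B) ∈ LinearMap.eqLocus rhoB ((PiL k H delta S).lTensor B ∘ₗ rhoB) ∧
    ∀ a b : B, a ∈ LinearMap.eqLocus rhoB ((PiL k H delta S).lTensor B ∘ₗ rhoB)
      → b ∈ LinearMap.eqLocus rhoB ((PiL k H delta S).lTensor B ∘ₗ rhoB)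
      → a * b ∈ LinearMap.eqLocus rhoB ((PiL k H delta S).lTensor B ∘ₗ rhoB) := by
  obtain ⟨s, hs⟩ := TensorProduct.exists_finset (delta 1)
  refine ⟨?_, ?_, ?_, ?_⟩
  · ext b
    simp only [LinearMap.comp_apply]
    exact q_fix hH hs hB h_one h_comod (q_coinv hH hs hB h_one h_comod b)
  · apply le_antisymm
    · rintro b' ⟨a, rfl⟩
      rw [LinearMap.mem_eqLocus]
      simp only [LinearMap.comp_apply]
      exact q_coinv hH hs hB h_one h_comod a
    · intro b hb
      rw [LinearMap.mem_eqLocus] at hb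
      simp only [LinearMap.comp_apply] at hb
      exact ⟨b, q_fix hH hs hB h_one h_comod hb⟩
  · rw [LinearMap.mem_eqLocus]
    simp only [LinearMap.comp_apply]
    exact one_mem_coinv hH hs hB h_one h_comod
  · intro a b ha hb
    rw [LinearMap.mem_eqLocus] at ha hb ⊢
    simp only [LinearMap.comp_apply] at ha hb ⊢
    exact mul_mem_coinv hH hs hB h_one h_comod ha hb

end DoiHopf
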